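/- arXiv:1906.10026 — 3 statements merged into one kernel-verified Lean document; each statement's English description precedes it below -/
import Mathlib

section
/- Let V, U ∈ R^{n×d} have orthonormal columns and R^{(i)}, S^{(i)} ∈ R^{d×d} symmetric with V R^{(i)} V^T = U S^{(i)} U^T for all i = 1,...,m. If the d × dm matrix R̃ = (R^{(1)}, ..., R^{(m)}) obtained by horizontally concatenating the R^{(i)} has full rank d, then there exists an orthogonal matrix W ∈ O(d) such that U = V W. -/
open Matrix

/-- A `d × k` real matrix of rank `d` has a right inverse. -/
lemma exists_right_inv {d : ℕ} {k : Type*} [Fintype k] [DecidableEq k]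
    (A : Matrix (Fin d) k ℝ) (h : A.rank = d) :
    ∃ B : Matrix k (Fin d) ℝ, A * B = 1 := by
  have hr : LinearMap.range A.mulVecLin = ⊤ := by
    apply Submodule.eq_top_of_finrank_eq
    rw [← Matrix.rank, h]
    simp
  obtain ⟨g, hg⟩ := A.mulVecLin.exists_rightInverse_of_surjective hr
  refine ⟨LinearMap.toMatrix' g, ?_⟩
  apply Matrix.toLin'.injective
  rw [Matrix.toLin'_mul, Matrix.toLin'_apply', Matrix.toLin'_toMatrix', hg,
    Matrix.toLin'_one]

/-- if the concatenation `R̃ = (R⁽¹⁾, …, R⁽ᵐ⁾)` has full rank `d` and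
`V R⁽ⁱ⁾ Vᵀ = U S⁽ⁱ⁾ Uᵀ` for all `i`, then `U = V W` for some orthogonal `W`. -/
theorem stmt3 {n d m : ℕ}
    (V U : Matrix (Fin n) (Fin d) ℝ) (hV : Vᵀ * V = 1) (hU : Uᵀ * U = 1)
    (R S : Fin m → Matrix (Fin d) (Fin d) ℝ)
    (hRsymm : ∀ i, (R i).IsSymm) (hSsymm : ∀ i, (S i).IsSymm)
    (heq : ∀ i, V * R i * Vᵀ = U * S i * Uᵀ)
    (hrank : (Matrix.of fun (k : Fin d) (q : Fin m × Fin d) => R q.1 k q.2).rank = d) :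
    ∃ W : Matrix (Fin d) (Fin d) ℝ, Wᵀ * W = 1 ∧ U = V * W := by
  set W : Matrix (Fin d) (Fin d) ℝ := Vᵀ * U with hW
  -- R i = W * S i * Wᵀ
  have h1 : ∀ i, R i = W * S i * Wᵀ := by
    intro i
    simp only [hW, transpose_mul, transpose_transpose]
    calc R i = (Vᵀ * V) * (R i * (Vᵀ * V)) := by
          rw [hV]; rw [Matrix.one_mul, Matrix.mul_one]
      _ = Vᵀ * (V * R i * Vᵀ) * V := by simp only [Matrix.mul_assoc]
      _ = Vᵀ * (U * S i * Uᵀ) * V := by rw [heq i]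
      _ = Vᵀ * U * S i * (Uᵀ * V) := by simp only [Matrix.mul_assoc]
  -- S i = Wᵀ * R i * W
  have h2 : ∀ i, S i = Wᵀ * R i * W := by
    intro i
    simp only [hW, transpose_mul, transpose_transpose]
    calc S i = (Uᵀ * U) * (S i * (Uᵀ * U)) := by
          rw [hU]; rw [Matrix.one_mul, Matrix.mul_one]
      _ = Uᵀ * (U * S i * Uᵀ) * U := by simp only [Matrix.mul_assoc]
      _ = Uᵀ * (V * R i * Vᵀ) * U := by rw [heq i]
      _ = Uᵀ * V * R i * (Vᵀ * U) := by simp only [Matrix.mul_assoc]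
  -- V R i Vᵀ U = U S i
  have h3 : ∀ i, V * R i * Vᵀ * U = U * S i := by
    intro i
    calc V * R i * Vᵀ * U = U * S i * (Uᵀ * U) := by
          rw [heq i]; simp only [Matrix.mul_assoc]
      _ = U * S i := by rw [hU, Matrix.mul_one]
  -- (U - V*W) * S i = 0
  have hX : ∀ i, (U - V * W) * S i = 0 := by
    intro i
    have key : V * W * S i = U * S i := by
      calc V * W * S i = V * Vᵀ * (U * S i) := by
            rw [hW]; simp only [Matrix.mul_assoc]
        _ = V * Vᵀ * (V * R i * Vᵀ * U) := by rw [h3 i]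
        _ = V * (Vᵀ * V) * (R i * (Vᵀ * U)) := by simp only [Matrix.mul_assoc]
        _ = V * R i * (Vᵀ * U) := by rw [hV, Matrix.mul_one]; simp only [Matrix.mul_assoc]
        _ = V * R i * Vᵀ * U := by simp only [Matrix.mul_assoc]
        _ = U * S i := h3 i
    rw [Matrix.sub_mul, key, sub_self]
  -- R̃ = W * M, so rank W = d
  set Rt : Matrix (Fin d) (Fin m × Fin d) ℝ :=
    Matrix.of fun (k : Fin d) (q : Fin m × Fin d) => R q.1 k q.2 with hRt
  have hfact : Rt = W * (Matrix.of fun (k : Fin d) (q : Fin m × Fin d) =>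
      (S q.1 * Wᵀ) k q.2) := by
    ext k q
    have hq : R q.1 = W * (S q.1 * Wᵀ) := by rw [h1 q.1, Matrix.mul_assoc]
    show R q.1 k q.2 = _
    rw [hq]
    simp [Matrix.mul_apply]
  have hrankW : W.rank = d := by
    refine le_antisymm (W.rank_le_width) ?_
    calc d = Rt.rank := hrank.symm
      _ ≤ W.rank := by rw [hfact]; exact Matrix.rank_mul_le_left _ _
  -- W invertible (has a two-sided inverse B)
  obtain ⟨B, hB⟩ := exists_right_inv W hrankW
  have hBW : B * W = 1 := mul_eq_one_comm.mp hB
  -- (U - V*W) * Wᵀ * R i = 0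
  have hXWR : ∀ i, (U - V * W) * Wᵀ * R i = 0 := by
    intro i
    have h0 : (U - V * W) * Wᵀ * R i * W = 0 := by
      have hx := hX i
      rw [h2 i] at hx
      calc (U - V * W) * Wᵀ * R i * W = (U - V * W) * (Wᵀ * R i * W) := by
            simp only [Matrix.mul_assoc]
        _ = 0 := hx
    calc (U - V * W) * Wᵀ * R i = (U - V * W) * Wᵀ * R i * (W * B) := by
          rw [hB, Matrix.mul_one]
      _ = ((U - V * W) * Wᵀ * R i * W) * B := by simp only [Matrix.mul_assoc]
      _ = 0 := by rw [h0, Matrix.zero_mul]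
  -- hence (U - V*W) * Wᵀ * Rt = 0, and Rt has right inverse, so (U-V*W)*Wᵀ = 0
  obtain ⟨C, hC⟩ := exists_right_inv Rt hrank
  have hA : (U - V * W) * Wᵀ = 0 := by
    have hARt : ((U - V * W) * Wᵀ) * Rt = 0 := by
      ext k q
      have hx := congrFun (congrFun (hXWR q.1) k) q.2
      rw [Matrix.mul_apply] at hx
      simpa [Matrix.mul_apply, hRt] using hx
    calc (U - V * W) * Wᵀ = (U - V * W) * Wᵀ * (Rt * C) := by
          rw [hC, Matrix.mul_one]
      _ = (((U - V * W) * Wᵀ) * Rt) * C := by simp only [Matrix.mul_assoc]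
      _ = 0 := by rw [hARt, Matrix.zero_mul]
  -- Wᵀ invertible: Wᵀ * Bᵀ = 1
  have hWtBt : Wᵀ * Bᵀ = 1 := by
    rw [← transpose_mul, hBW, transpose_one]
  have hUVW : U = V * W := by
    have hz : U - V * W = 0 := by
      calc U - V * W = (U - V * W) * (Wᵀ * Bᵀ) := by rw [hWtBt, Matrix.mul_one]
        _ = ((U - V * W) * Wᵀ) * Bᵀ := by rw [Matrix.mul_assoc]
        _ = 0 := by rw [hA, Matrix.zero_mul]
    exact sub_eq_zero.mp hz
  refine ⟨W, ?_, hUVW⟩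
  rw [hUVW, transpose_mul] at hU
  calc Wᵀ * W = Wᵀ * (Vᵀ * V * W) := by rw [hV, Matrix.one_mul]
    _ = Wᵀ * Vᵀ * (V * W) := by simp only [Matrix.mul_assoc]
    _ = 1 := hU
end

section
/- Let Û, U ∈ R^{n×d} have orthonormal columns, and let W* = arg min_{W ∈ O(d)} ‖Û − UW‖_F. Writing U^T Û = Q_1 D Q_2^T for its singular value decomposition with singular values D_{kk} ∈ [0,1], one has W* = Q_1 Q_2^T and ‖U^T Û − W*‖_F ≤ Σ_{k=1}^d (1 − D_{kk}^2) = ‖sin Θ(Û, U)‖_F^2. -/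
/-! The Procrustes problem reduces to maximizing a trace: for orthonormal-column `U, Û` and
orthogonal `W`, `‖Û − U W‖_F² = 2d − 2 tr(Wᵀ Uᵀ Û)`. Writing `Uᵀ Û = Q₁ D Q₂ᵀ`, the trace is
`∑ₖ Mₖₖ Dₖₖ` for the orthogonal matrix `M = Q₂ᵀ Wᵀ Q₁`, whose diagonal entries are at most `1`;
so it is at most `∑ₖ Dₖₖ`, attained at `W = Q₁ Q₂ᵀ`. For the bound, `Uᵀ Û − Q₁ Q₂ᵀ = Q₁ (D − I) Q₂ᵀ`
has Frobenius norm `(∑ₖ (1 − Dₖₖ)²)^{1/2} ≤ ∑ₖ (1 − Dₖₖ) ≤ ∑ₖ (1 − Dₖₖ²)`. -/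

open Matrix

/-- Frobenius norm of a real matrix. -/
noncomputable def frob {m n : Type*} [Fintype m] [Fintype n] (M : Matrix m n ℝ) : ℝ :=
  Real.sqrt (∑ i, ∑ j, (M i j) ^ 2)

namespace Matrix

theorem apply_le_one_of_transpose_mul_self_eq_one {m n : Type*} [Fintype m] [DecidableEq n]
    {M : Matrix m n ℝ} (hM : Mᵀ * M = 1) (i : m) (j : n) : M i j ≤ 1 := by
  have hcol : ∑ k, M k j ^ 2 = 1 := by
    simpa [mul_apply, sq] using congrFun (congrFun hM j) j
  have hsq : M i j ^ 2 ≤ 1 :=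
    hcol ▸ Finset.single_le_sum (fun k _ ↦ sq_nonneg (M k j)) (Finset.mem_univ i)
  nlinarith

section Rectangular

variable {m n p : Type*} [Fintype m] [Fintype n] [Fintype p]

theorem sum_sq_eq_trace_transpose_mul (M : Matrix m n ℝ) :
    ∑ i, ∑ j, M i j ^ 2 = (Mᵀ * M).trace := by
  simp only [trace, diag, mul_apply, transpose_apply, sq]
  exact Finset.sum_comm

theorem trace_transpose_mul_sub_self (A B : Matrix m n ℝ) :
    ((A - B)ᵀ * (A - B)).trace = (Aᵀ * A).trace + (Bᵀ * B).trace - 2 * (Bᵀ * A).trace := by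
  have hsymm : (Aᵀ * B).trace = (Bᵀ * A).trace := by
    rw [← trace_transpose, transpose_mul, transpose_transpose]
  rw [transpose_sub, Matrix.sub_mul, Matrix.mul_sub, Matrix.mul_sub, trace_sub, trace_sub,
    trace_sub, hsymm]
  ring

variable [DecidableEq n]

theorem sum_sq_mul_diagonal_mul_transpose {Q₁ : Matrix m n ℝ} {Q₂ : Matrix p n ℝ}
    (hQ₁ : Q₁ᵀ * Q₁ = 1) (hQ₂ : Q₂ᵀ * Q₂ = 1) (E : n → ℝ) :
    ∑ i, ∑ j, (Q₁ * diagonal E * Q₂ᵀ) i j ^ 2 = ∑ k, E k ^ 2 := by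
  have hgram : (Q₁ * diagonal E * Q₂ᵀ)ᵀ * (Q₁ * diagonal E * Q₂ᵀ)
      = Q₂ * (diagonal (E ^ 2) * Q₂ᵀ) := by
    simp only [transpose_mul, transpose_transpose, diagonal_transpose, Matrix.mul_assoc]
    rw [← Matrix.mul_assoc Q₁ᵀ, hQ₁, Matrix.one_mul, ← Matrix.mul_assoc (diagonal E),
      diagonal_mul_diagonal, sq]
    rfl
  rw [sum_sq_eq_trace_transpose_mul, hgram, trace_mul_comm, Matrix.mul_assoc, hQ₂,
    Matrix.mul_one, trace_diagonal]
  rfl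

theorem frob_mul_diagonal_mul_transpose {Q₁ : Matrix m n ℝ} {Q₂ : Matrix p n ℝ}
    (hQ₁ : Q₁ᵀ * Q₁ = 1) (hQ₂ : Q₂ᵀ * Q₂ = 1) (E : n → ℝ) :
    frob (Q₁ * diagonal E * Q₂ᵀ) = √(∑ k, E k ^ 2) := by
  rw [frob, sum_sq_mul_diagonal_mul_transpose hQ₁ hQ₂]

theorem sum_sq_sub_eq_of_orthonormal {U Û : Matrix m n ℝ} {W : Matrix n n ℝ}
    (hU : Uᵀ * U = 1) (hÛ : Ûᵀ * Û = 1) (hW : Wᵀ * W = 1) :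
    ∑ i, ∑ j, (Û - U * W) i j ^ 2 = 2 * Fintype.card n - 2 * (Wᵀ * (Uᵀ * Û)).trace := by
  have hUW : (U * W)ᵀ * (U * W) = 1 := by
    rw [transpose_mul, Matrix.mul_assoc, ← Matrix.mul_assoc Uᵀ, hU, Matrix.one_mul, hW]
  rw [sum_sq_eq_trace_transpose_mul, trace_transpose_mul_sub_self, hÛ, hUW, transpose_mul,
    Matrix.mul_assoc, trace_one]
  ring

end Rectangular

section Square

variable {n : Type*} [Fintype n] [DecidableEq n]

theorem transpose_mul_self_mul_eq_one {A B : Matrix n n ℝ} (hA : Aᵀ * A = 1)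
    (hB : Bᵀ * B = 1) : (A * B)ᵀ * (A * B) = 1 := by
  rw [transpose_mul, Matrix.mul_assoc, ← Matrix.mul_assoc Aᵀ, hA, Matrix.one_mul, hB]

theorem transpose_mul_self_transpose_eq_one {A : Matrix n n ℝ} (hA : Aᵀ * A = 1) :
    Aᵀᵀ * Aᵀ = 1 := by
  rw [transpose_transpose]
  exact mul_eq_one_comm.mp hA

theorem trace_mul_diagonal_le_sum {M : Matrix n n ℝ} (hM : Mᵀ * M = 1) {D : n → ℝ}
    (hD : ∀ k, 0 ≤ D k) : (M * diagonal D).trace ≤ ∑ k, D k := by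
  simp only [trace, diag, mul_diagonal]
  exact Finset.sum_le_sum fun k _ ↦
    mul_le_of_le_one_left (hD k) (apply_le_one_of_transpose_mul_self_eq_one hM k k)

variable {Q₁ Q₂ : Matrix n n ℝ} {D : n → ℝ}

theorem trace_transpose_mul_svd_le {W : Matrix n n ℝ} (hW : Wᵀ * W = 1)
    (hQ₁ : Q₁ᵀ * Q₁ = 1) (hQ₂ : Q₂ᵀ * Q₂ = 1) (hD : ∀ k, 0 ≤ D k) :
    (Wᵀ * (Q₁ * diagonal D * Q₂ᵀ)).trace ≤ ∑ k, D k := by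
  have hM : (Q₂ᵀ * (Wᵀ * Q₁))ᵀ * (Q₂ᵀ * (Wᵀ * Q₁)) = 1 :=
    transpose_mul_self_mul_eq_one (transpose_mul_self_transpose_eq_one hQ₂)
      (transpose_mul_self_mul_eq_one (transpose_mul_self_transpose_eq_one hW) hQ₁)
  calc (Wᵀ * (Q₁ * diagonal D * Q₂ᵀ)).trace
      = (Q₂ᵀ * (Wᵀ * Q₁) * diagonal D).trace := by
        rw [Matrix.mul_assoc Q₂ᵀ, trace_mul_comm Q₂ᵀ]
        simp only [Matrix.mul_assoc]
    _ ≤ ∑ k, D k := trace_mul_diagonal_le_sum hM hD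

theorem trace_transpose_mul_svd_self (hQ₁ : Q₁ᵀ * Q₁ = 1) (hQ₂ : Q₂ᵀ * Q₂ = 1) :
    ((Q₁ * Q₂ᵀ)ᵀ * (Q₁ * diagonal D * Q₂ᵀ)).trace = ∑ k, D k := by
  rw [transpose_mul, transpose_transpose, Matrix.mul_assoc, ← Matrix.mul_assoc Q₁ᵀ,
    ← Matrix.mul_assoc Q₁ᵀ, hQ₁, Matrix.one_mul, trace_mul_comm, Matrix.mul_assoc, hQ₂,
    Matrix.mul_one, trace_diagonal]

end Square

end Matrix

theorem Real.sqrt_sum_sq_le_sum {ι : Type*} (s : Finset ι) {x : ι → ℝ}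
    (hx : ∀ k ∈ s, 0 ≤ x k) : √(∑ k ∈ s, x k ^ 2) ≤ ∑ k ∈ s, x k :=
  Real.sqrt_le_iff.mpr ⟨Finset.sum_nonneg hx, Finset.sum_sq_le_sq_sum_of_nonneg hx⟩

/-- with `Uᵀ Û = Q₁ D Q₂ᵀ` the SVD (singular values `D_{kk} ∈ [0,1]`),
`W* = Q₁ Q₂ᵀ` is the Procrustes minimizer of `‖Û − U W‖_F` over orthogonal `W`, and
`‖Uᵀ Û − W*‖_F ≤ ∑ₖ (1 − D_{kk}²) = ‖sin Θ(Û,U)‖_F²`. -/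
theorem stmt10 {n d : ℕ}
    (U Uh : Matrix (Fin n) (Fin d) ℝ) (hU : Uᵀ * U = 1) (hUh : Uhᵀ * Uh = 1)
    (Q1 Q2 : Matrix (Fin d) (Fin d) ℝ) (hQ1 : Q1ᵀ * Q1 = 1) (hQ2 : Q2ᵀ * Q2 = 1)
    (D : Fin d → ℝ) (hD : ∀ k, D k ∈ Set.Icc (0 : ℝ) 1)
    (hsvd : Uᵀ * Uh = Q1 * Matrix.diagonal D * Q2ᵀ) :
    (∀ W : Matrix (Fin d) (Fin d) ℝ, Wᵀ * W = 1 →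
        frob (Uh - U * (Q1 * Q2ᵀ)) ≤ frob (Uh - U * W)) ∧
    frob (Uᵀ * Uh - Q1 * Q2ᵀ) ≤ ∑ k, (1 - D k ^ 2) := by
  have hQ : (Q1 * Q2ᵀ)ᵀ * (Q1 * Q2ᵀ) = 1 :=
    transpose_mul_self_mul_eq_one hQ1 (transpose_mul_self_transpose_eq_one hQ2)
  refine ⟨fun W hW ↦ Real.sqrt_le_sqrt ?_, ?_⟩
  · rw [sum_sq_sub_eq_of_orthonormal hU hUh hQ, sum_sq_sub_eq_of_orthonormal hU hUh hW, hsvd,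
      trace_transpose_mul_svd_self hQ1 hQ2]
    linarith [trace_transpose_mul_svd_le hW hQ1 hQ2 fun k ↦ (hD k).1]
  · have hdiff : Uᵀ * Uh - Q1 * Q2ᵀ = Q1 * diagonal (fun k ↦ D k - 1) * Q2ᵀ := by
      rw [hsvd, ← diagonal_sub D fun _ ↦ 1, diagonal_one, Matrix.mul_sub, Matrix.sub_mul,
        Matrix.mul_one]
    calc frob (Uᵀ * Uh - Q1 * Q2ᵀ) = √(∑ k, (1 - D k) ^ 2) := by
          simp only [hdiff, frob_mul_diagonal_mul_transpose hQ1 hQ2, sub_sq_comm]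
      _ ≤ ∑ k, (1 - D k) := Real.sqrt_sum_sq_le_sum _ fun k _ ↦ sub_nonneg.mpr (hD k).2
      _ ≤ ∑ k, (1 - D k ^ 2) := Finset.sum_le_sum fun k _ ↦ by
        nlinarith [mul_nonneg (hD k).1 (sub_nonneg.mpr (hD k).2)]
end

section
/- Let V̂, V ∈ R^{n×d} have orthonormal columns, let R ∈ R^{d×d} be symmetric, and let W = arg min_{W∈O(d)} ‖V̂ − VW‖_F. Then ‖W^T R (V^T V̂ − W)‖_F ≤ 2 ‖R‖ ‖V̂ − VW‖_F² and ‖(V̂^T V − W^T) R (V^T V̂)‖_F ≤ 2 ‖R‖ ‖V̂ − VW‖_F². -/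
/-!
Write `G = Vᵀ V̂` and `M = Wᵀ G`. Since `‖V̂ - V Q‖_F² = 2d - 2 tr (Qᵀ G)` for every orthogonal
`Q`, the Procrustes minimizer `W` maximizes `Q ↦ tr (Qᵀ G)`, i.e. `tr (Qᵀ M) ≤ tr M` for all
orthogonal `Q`. Testing this against plane rotations shows that `M` is symmetric, and
`‖M‖ ≤ 1` because `M = (V W)ᵀ V̂` is a product of isometries. Hence `1 - M` is positive
semidefinite, so its Frobenius norm is at most its trace:
`‖G - W‖_F = ‖1 - M‖_F ≤ tr (1 - M) = ‖V̂ - V W‖_F² / 2`.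
Both estimates follow by submultiplicativity of the mixed spectral-Frobenius norm.
-/

open Matrix

/-- Spectral (ℓ₂ operator) norm of a real matrix. -/
noncomputable def specNorm {m n : Type*} [Fintype m] [Fintype n] [DecidableEq n]
    (M : Matrix m n ℝ) : ℝ :=
  ‖LinearMap.toContinuousLinearMap (Matrix.toEuclideanLin M)‖

section Frobenius

open scoped Matrix.Norms.Frobenius

variable {l m n : Type*} [Fintype l] [Fintype m] [Fintype n]

theorem frob_eq_frobenius_norm (A : Matrix m n ℝ) : frob A = ‖A‖ := by
  simp [frob, frobenius_norm_def, Real.sqrt_eq_rpow]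

theorem frob_nonneg (A : Matrix m n ℝ) : 0 ≤ frob A :=
  Real.sqrt_nonneg _

theorem frob_transpose (A : Matrix m n ℝ) : frob Aᵀ = frob A := by
  simp only [frob_eq_frobenius_norm, frobenius_norm_transpose]

theorem frob_sub_comm (A B : Matrix m n ℝ) : frob (A - B) = frob (B - A) := by
  simp only [frob_eq_frobenius_norm, norm_sub_rev]

theorem frob_mul_le (A : Matrix l m ℝ) (B : Matrix m n ℝ) :
    frob (A * B) ≤ frob A * frob B := by
  simpa only [frob_eq_frobenius_norm] using frobenius_norm_mul A B

theorem sq_frob_eq_sum (A : Matrix m n ℝ) : frob A ^ 2 = ∑ i, ∑ j, A i j ^ 2 :=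
  Real.sq_sqrt (by positivity)

theorem sq_frob (A : Matrix m n ℝ) : frob A ^ 2 = trace (Aᵀ * A) := by
  rw [sq_frob_eq_sum, Finset.sum_comm]
  simp [trace, mul_apply, sq]

theorem frob_mul_of_transpose_mul_self [DecidableEq m] {U : Matrix l m ℝ} (hU : Uᵀ * U = 1)
    (X : Matrix m n ℝ) : frob (U * X) = frob X := by
  refine (pow_left_inj₀ (frob_nonneg _) (frob_nonneg _) two_ne_zero).mp ?_
  rw [sq_frob, sq_frob, transpose_mul, Matrix.mul_assoc, ← Matrix.mul_assoc Uᵀ, hU,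
    Matrix.one_mul]

end Frobenius

open scoped Matrix.Norms.L2Operator

section L2Operator

variable {l m n : Type*} [Fintype l] [Fintype m] [Fintype n]

theorem specNorm_eq_l2_opNorm [DecidableEq n] (A : Matrix m n ℝ) : specNorm A = ‖A‖ := rfl

theorem l2_opNorm_transpose [DecidableEq m] [DecidableEq n] (A : Matrix m n ℝ) :
    ‖Aᵀ‖ = ‖A‖ :=
  A.l2_opNorm_conjTranspose

theorem l2_opNorm_one_le [DecidableEq n] : ‖(1 : Matrix n n ℝ)‖ ≤ 1 := by
  rw [← diagonal_one, l2_opNorm_diagonal]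
  exact pi_norm_le_iff_of_nonneg zero_le_one |>.2 fun _ => by simp

theorem l2_opNorm_le_one_of_transpose_mul_self [DecidableEq n] {A : Matrix m n ℝ}
    (hA : Aᵀ * A = 1) : ‖A‖ ≤ 1 := by
  have h := A.l2_opNorm_conjTranspose_mul_self
  rw [conjTranspose_eq_transpose_of_trivial, hA] at h
  nlinarith [l2_opNorm_one_le (n := n), norm_nonneg A]

theorem l2_opNorm_transpose_le_one_of_transpose_mul_self [DecidableEq m] [DecidableEq n]
    {A : Matrix m n ℝ} (hA : Aᵀ * A = 1) : ‖Aᵀ‖ ≤ 1 :=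
  (l2_opNorm_transpose A).trans_le (l2_opNorm_le_one_of_transpose_mul_self hA)

theorem l2_opNorm_transpose_mul_le_one [DecidableEq m] [DecidableEq n] {A B : Matrix m n ℝ}
    (hA : Aᵀ * A = 1) (hB : Bᵀ * B = 1) : ‖Aᵀ * B‖ ≤ 1 :=
  (l2_opNorm_mul _ _).trans (mul_le_one₀ (l2_opNorm_transpose_le_one_of_transpose_mul_self hA)
    (norm_nonneg _) (l2_opNorm_le_one_of_transpose_mul_self hB))

theorem sum_sq_mulVec_le [DecidableEq m] (A : Matrix l m ℝ) (x : m → ℝ) :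
    ∑ i, (A *ᵥ x) i ^ 2 ≤ ‖A‖ ^ 2 * ∑ j, x j ^ 2 := by
  have h := pow_le_pow_left₀ (norm_nonneg _) (A.l2_opNorm_mulVec (WithLp.toLp 2 x)) 2
  simpa [mul_pow, EuclideanSpace.real_norm_sq_eq] using h

theorem frob_mul_le_l2_opNorm_mul [DecidableEq m] (A : Matrix l m ℝ) (B : Matrix m n ℝ) :
    frob (A * B) ≤ ‖A‖ * frob B := by
  refine (pow_le_pow_iff_left₀ (frob_nonneg _) (mul_nonneg (norm_nonneg _) (frob_nonneg _))
    two_ne_zero).mp ?_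
  rw [mul_pow, sq_frob_eq_sum, sq_frob_eq_sum, Finset.sum_comm,
    Finset.sum_comm (f := fun i j => B i j ^ 2), Finset.mul_sum]
  gcongr with j
  simpa [mulVec, dotProduct, mul_apply] using sum_sq_mulVec_le A (fun k => B k j)

theorem frob_mul_le_mul_l2_opNorm [DecidableEq m] [DecidableEq n] (A : Matrix l m ℝ)
    (B : Matrix m n ℝ) : frob (A * B) ≤ frob A * ‖B‖ := by
  rw [← frob_transpose, transpose_mul, ← frob_transpose A, ← l2_opNorm_transpose B, mul_comm]
  exact frob_mul_le_l2_opNorm_mul _ _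

theorem dotProduct_mulVec_le_of_l2_opNorm_le_one [DecidableEq n] {M : Matrix n n ℝ}
    (hM : ‖M‖ ≤ 1) (x : n → ℝ) : x ⬝ᵥ (M *ᵥ x) ≤ x ⬝ᵥ x := by
  have hx : x ⬝ᵥ x = ‖WithLp.toLp 2 x‖ ^ 2 := by
    rw [EuclideanSpace.real_norm_sq_eq]
    simp [dotProduct, sq]
  calc x ⬝ᵥ (M *ᵥ x) = inner ℝ (WithLp.toLp 2 (M *ᵥ x)) (WithLp.toLp 2 x) := by
        simp [EuclideanSpace.inner_toLp_toLp]
    _ ≤ ‖WithLp.toLp 2 (M *ᵥ x)‖ * ‖WithLp.toLp 2 x‖ := real_inner_le_norm _ _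
    _ ≤ ‖M‖ * ‖WithLp.toLp 2 x‖ * ‖WithLp.toLp 2 x‖ := by
        gcongr
        exact M.l2_opNorm_mulVec _
    _ ≤ x ⬝ᵥ x := by
        rw [hx]
        nlinarith [norm_nonneg (WithLp.toLp 2 x)]

theorem posSemidef_one_sub_of_l2_opNorm_le_one [DecidableEq n] {M : Matrix n n ℝ}
    (hM : M.IsSymm) (h : ‖M‖ ≤ 1) : (1 - M).PosSemidef := by
  refine .of_dotProduct_mulVec_nonneg ?_ fun x => ?_
  · simpa [IsHermitian, IsSymm] using hM
  · simpa [sub_mulVec, dotProduct_sub] using dotProduct_mulVec_le_of_l2_opNorm_le_one h x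

open scoped MatrixOrder in
theorem frob_le_trace_of_posSemidef [DecidableEq n] {N : Matrix n n ℝ} (hN : N.PosSemidef) :
    frob N ≤ trace N := by
  obtain ⟨B, rfl⟩ := CStarAlgebra.nonneg_iff_eq_star_mul_self.mp hN.nonneg
  rw [star_eq_conjTranspose, conjTranspose_eq_transpose_of_trivial, ← sq_frob]
  simpa [frob_transpose, sq] using frob_mul_le Bᵀ B

end L2Operator

theorem eq_zero_of_forall_mul_add_mul_le {a b : ℝ}
    (h : ∀ c s : ℝ, c ^ 2 + s ^ 2 = 1 → c * a + s * b ≤ a) : b = 0 := by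
  obtain ⟨r, hr0, hr⟩ : ∃ r : ℝ, 0 ≤ r ∧ r ^ 2 = a ^ 2 + b ^ 2 :=
    ⟨√(a ^ 2 + b ^ 2), Real.sqrt_nonneg _, Real.sq_sqrt (by positivity)⟩
  rcases hr0.eq_or_lt with rfl | hrpos
  · nlinarith
  · have hra : r ≤ a := by
      have hcs : (a / r) ^ 2 + (b / r) ^ 2 = 1 := by
        rw [div_pow, div_pow, ← add_div, ← hr, div_self (by positivity)]
      have hr' : a / r * a + b / r * b = r := by
        field_simp [hrpos.ne']
        linear_combination -hr
      linarith [h _ _ hcs]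
    nlinarith

section PlaneRotation

variable {n : Type*} [DecidableEq n]

/-- The rotation with cosine `c` and sine `s` in the coordinate plane spanned by `i` and `j`. -/
def planeRotation (i j : n) (c s : ℝ) : Matrix n n ℝ :=
  1 + (c - 1) • (single i i 1 + single j j 1) + s • (single j i 1 - single i j 1)

theorem transpose_planeRotation (i j : n) (c s : ℝ) :
    (planeRotation i j c s)ᵀ = planeRotation i j c (-s) := by
  simp only [planeRotation, transpose_add, transpose_smul, transpose_sub, transpose_one,
    transpose_single]
  module

theorem planeRotation_transpose_mul_self [Fintype n] {i j : n} (hij : i ≠ j) {c s : ℝ}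
    (hcs : c ^ 2 + s ^ 2 = 1) : (planeRotation i j c s)ᵀ * planeRotation i j c s = 1 := by
  rw [transpose_planeRotation]
  simp only [planeRotation, add_mul, mul_add, sub_mul, mul_sub, smul_mul_smul_comm, one_mul,
    mul_one, single_mul_single_same, single_mul_single_of_ne _ _ _ _ hij,
    single_mul_single_of_ne _ _ _ _ hij.symm]
  linear_combination (norm := module) hcs • (single i i (1 : ℝ) + single j j 1)

theorem trace_transpose_planeRotation_mul [Fintype n] (i j : n) (c s : ℝ) (M : Matrix n n ℝ) :
    trace ((planeRotation i j c s)ᵀ * M) =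
      trace M + (c - 1) * (M i i + M j j) + s * (M j i - M i j) := by
  rw [transpose_planeRotation]
  simp [planeRotation, add_mul, sub_mul, trace_add, trace_sub, trace_smul, trace_single_mul]
  ring

theorem isSymm_of_forall_trace_transpose_mul_le [Fintype n] {M : Matrix n n ℝ}
    (hM : ∀ Q : Matrix n n ℝ, Qᵀ * Q = 1 → trace (Qᵀ * M) ≤ trace M) : M.IsSymm := by
  ext i j
  rcases eq_or_ne i j with rfl | hij
  · rfl
  have hskew : M j i - M i j = 0 :=
    eq_zero_of_forall_mul_add_mul_le (a := M i i + M j j) fun c s hcs => by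
    have := hM _ (planeRotation_transpose_mul_self hij hcs)
    rw [trace_transpose_planeRotation_mul] at this
    linarith
  simp only [transpose_apply]
  linarith

end PlaneRotation

section Procrustes

variable {n k : Type*} [Fintype n] [Fintype k] [DecidableEq k]

theorem sq_frob_sub_mul_of_orthonormal {Vh V : Matrix n k ℝ} {Q : Matrix k k ℝ}
    (hVh : Vhᵀ * Vh = 1) (hV : Vᵀ * V = 1) (hQ : Qᵀ * Q = 1) :
    frob (Vh - V * Q) ^ 2 = 2 * Fintype.card k - 2 * trace (Qᵀ * (Vᵀ * Vh)) := by
  have expand : (Vh - V * Q)ᵀ * (Vh - V * Q) =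
      Vhᵀ * Vh + Qᵀ * (Vᵀ * V) * Q - ((Qᵀ * (Vᵀ * Vh))ᵀ + Qᵀ * (Vᵀ * Vh)) := by
    simp only [transpose_sub, transpose_mul, transpose_transpose, Matrix.sub_mul, Matrix.mul_sub,
      Matrix.mul_assoc]
    abel
  rw [sq_frob, expand, hVh, hV, Matrix.mul_one, hQ, trace_sub, trace_add, trace_add,
    trace_transpose, trace_one]
  ring

variable {Vh V : Matrix n k ℝ} {W : Matrix k k ℝ}

theorem trace_le_of_forall_frob_sub_mul_le (hVh : Vhᵀ * Vh = 1) (hV : Vᵀ * V = 1)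
    (hW : Wᵀ * W = 1)
    (hmin : ∀ W' : Matrix k k ℝ, W'ᵀ * W' = 1 → frob (Vh - V * W) ≤ frob (Vh - V * W'))
    {Q : Matrix k k ℝ} (hQ : Qᵀ * Q = 1) :
    trace (Qᵀ * (Wᵀ * (Vᵀ * Vh))) ≤ trace (Wᵀ * (Vᵀ * Vh)) := by
  have hWQ : (W * Q)ᵀ * (W * Q) = 1 := by
    rw [transpose_mul, Matrix.mul_assoc, ← Matrix.mul_assoc Wᵀ, hW, Matrix.one_mul, hQ]
  have h := pow_le_pow_left₀ (frob_nonneg _) (hmin _ hWQ) 2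
  rw [sq_frob_sub_mul_of_orthonormal hVh hV hW, sq_frob_sub_mul_of_orthonormal hVh hV hWQ,
    transpose_mul, Matrix.mul_assoc] at h
  linarith

theorem frob_transpose_mul_sub_le_of_forall_frob_sub_mul_le [DecidableEq n]
    (hVh : Vhᵀ * Vh = 1) (hV : Vᵀ * V = 1) (hW : Wᵀ * W = 1)
    (hmin : ∀ W' : Matrix k k ℝ, W'ᵀ * W' = 1 → frob (Vh - V * W) ≤ frob (Vh - V * W')) :
    frob (Vᵀ * Vh - W) ≤ frob (Vh - V * W) ^ 2 / 2 := by
  set M := Wᵀ * (Vᵀ * Vh)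
  have hsymm : M.IsSymm := isSymm_of_forall_trace_transpose_mul_le fun Q hQ =>
    trace_le_of_forall_frob_sub_mul_le hVh hV hW hmin hQ
  have hVW : (V * W)ᵀ * (V * W) = 1 := by
    rw [transpose_mul, Matrix.mul_assoc, ← Matrix.mul_assoc Vᵀ, hV, Matrix.one_mul, hW]
  have hnorm : ‖M‖ ≤ 1 := by
    simpa only [M, transpose_mul, Matrix.mul_assoc] using l2_opNorm_transpose_mul_le_one hVW hVh
  have hfactor : W - Vᵀ * Vh = W * (1 - M) := by
    rw [Matrix.mul_sub, Matrix.mul_one, ← Matrix.mul_assoc, mul_eq_one_comm.mp hW, Matrix.one_mul]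
  calc frob (Vᵀ * Vh - W) = frob (1 - M) := by
        rw [frob_sub_comm, hfactor, frob_mul_of_transpose_mul_self hW]
    _ ≤ trace (1 - M) :=
        frob_le_trace_of_posSemidef (posSemidef_one_sub_of_l2_opNorm_le_one hsymm hnorm)
    _ = frob (Vh - V * W) ^ 2 / 2 := by
        rw [sq_frob_sub_mul_of_orthonormal hVh hV hW, trace_sub, trace_one]
        ring

end Procrustes

theorem stmt13_general {n d : ℕ}
    (Vh V : Matrix (Fin n) (Fin d) ℝ) (hVh : Vhᵀ * Vh = 1) (hV : Vᵀ * V = 1)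
    (R : Matrix (Fin d) (Fin d) ℝ)
    (W : Matrix (Fin d) (Fin d) ℝ) (hW : Wᵀ * W = 1)
    (hmin : ∀ W' : Matrix (Fin d) (Fin d) ℝ, W'ᵀ * W' = 1 →
      frob (Vh - V * W) ≤ frob (Vh - V * W')) :
    frob (Wᵀ * R * (Vᵀ * Vh - W)) ≤ 2 * specNorm R * frob (Vh - V * W) ^ 2 ∧
    frob ((Vhᵀ * V - Wᵀ) * R * (Vᵀ * Vh)) ≤ 2 * specNorm R * frob (Vh - V * W) ^ 2 := by
  have hGW := frob_transpose_mul_sub_le_of_forall_frob_sub_mul_le hVh hV hW hmin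
  have hWt : ‖Wᵀ‖ ≤ 1 := l2_opNorm_transpose_le_one_of_transpose_mul_self hW
  have hG : ‖Vᵀ * Vh‖ ≤ 1 := l2_opNorm_transpose_mul_le_one hV hVh
  have hε : 0 ≤ frob (Vh - V * W) ^ 2 := sq_nonneg _
  have hRnonneg : 0 ≤ ‖R‖ := norm_nonneg R
  rw [specNorm_eq_l2_opNorm]
  constructor
  · calc frob (Wᵀ * R * (Vᵀ * Vh - W)) ≤ ‖Wᵀ * R‖ * frob (Vᵀ * Vh - W) :=
          frob_mul_le_l2_opNorm_mul _ _
      _ ≤ (1 * ‖R‖) * (frob (Vh - V * W) ^ 2 / 2) :=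
          mul_le_mul ((l2_opNorm_mul Wᵀ R).trans (by gcongr)) hGW (frob_nonneg _) (by positivity)
      _ ≤ 2 * ‖R‖ * frob (Vh - V * W) ^ 2 := by nlinarith
  · calc frob ((Vhᵀ * V - Wᵀ) * R * (Vᵀ * Vh))
          = frob ((Vᵀ * Vh - W)ᵀ * (R * (Vᵀ * Vh))) := by
          rw [transpose_sub, transpose_mul, transpose_transpose, Matrix.mul_assoc]
      _ ≤ frob (Vᵀ * Vh - W) * ‖R * (Vᵀ * Vh)‖ := by
          simpa only [frob_transpose] using frob_mul_le_mul_l2_opNorm (Vᵀ * Vh - W)ᵀ _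
      _ ≤ (frob (Vh - V * W) ^ 2 / 2) * (‖R‖ * 1) :=
          mul_le_mul hGW ((l2_opNorm_mul R _).trans (by gcongr)) (norm_nonneg _) (by positivity)
      _ ≤ 2 * ‖R‖ * frob (Vh - V * W) ^ 2 := by nlinarith

/-- for the Procrustes minimizer `W` of `‖V̂ − V W‖_F` over `O(d)` and a
symmetric `R`, one has `‖Wᵀ R (Vᵀ V̂ − W)‖_F ≤ 2 ‖R‖ ‖V̂ − VW‖_F²` and
`‖(V̂ᵀ V − Wᵀ) R (Vᵀ V̂)‖_F ≤ 2 ‖R‖ ‖V̂ − VW‖_F²`. -/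
theorem stmt13 {n d : ℕ}
    (Vh V : Matrix (Fin n) (Fin d) ℝ) (hVh : Vhᵀ * Vh = 1) (hV : Vᵀ * V = 1)
    (R : Matrix (Fin d) (Fin d) ℝ) (hR : R.IsSymm)
    (W : Matrix (Fin d) (Fin d) ℝ) (hW : Wᵀ * W = 1)
    (hmin : ∀ W' : Matrix (Fin d) (Fin d) ℝ, W'ᵀ * W' = 1 →
      frob (Vh - V * W) ≤ frob (Vh - V * W')) :
    frob (Wᵀ * R * (Vᵀ * Vh - W)) ≤ 2 * specNorm R * frob (Vh - V * W) ^ 2 ∧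
    frob ((Vhᵀ * V - Wᵀ) * R * (Vᵀ * Vh)) ≤ 2 * specNorm R * frob (Vh - V * W) ^ 2 :=
  stmt13_general Vh V hVh hV R W hW hmin
end
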